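/- Let a be a nonzero natural number and let x_n satisfy x_0 = 0, x_1 = 1, x_n = x_{n-1} + a·x_{n-2}, and y_n satisfy y_0 = 2, y_1 = 1, y_n = y_{n-1} + a·y_{n-2}. Then for all natural numbers n and l, y_n · y_{n+l} = y_{2n+l} + (−a)^n · y_l (as integers). -/
import Mathlib


def x (a : ℕ) : ℕ → ℤ
  | 0 => 0
  | 1 => 1
  | n + 2 => x a (n + 1) + (a : ℤ) * x a n

def y (a : ℕ) : ℕ → ℤ
  | 0 => 2
  | 1 => 1
  | n + 2 => y a (n + 1) + (a : ℤ) * y a n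

lemma y_rec (a : ℕ) (n : ℕ) : y a (n + 2) = y a (n + 1) + (a : ℤ) * y a n := rfl

theorem stmt15 (a : ℕ) (ha : a ≠ 0) : ∀ n l : ℕ,
    y a n * y a (n + l) = y a (2 * n + l) + (-(a : ℤ)) ^ n * y a l := by
  intro n
  induction n using Nat.twoStepInduction with
  | zero => intro l; simp [y]; ring
  | one =>
    intro l
    have h1 : (1 : ℕ) + l = l + 1 := by omega
    have h2 : 2 * 1 + l = l + 2 := by omega
    rw [h1, h2, y_rec]
    simp [y]
  | more n ih ih1 =>
    intro l
    have A1 := ih1 (l + 1)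
    have A2 := ih (l + 2)
    have e1 : n + 1 + (l + 1) = n + 2 + l := by omega
    have e2 : 2 * (n + 1) + (l + 1) = 2 * n + l + 3 := by omega
    have e3 : n + (l + 2) = n + 2 + l := by omega
    have e4 : 2 * n + (l + 2) = 2 * n + l + 2 := by omega
    rw [e1, e2] at A1
    rw [e3, e4] at A2
    have e5 : 2 * (n + 2) + l = 2 * n + l + 2 + 2 := by omega
    rw [y_rec a l] at A2
    rw [e5, y_rec a n, y_rec a (2 * n + l + 2)]
    have e6 : 2 * n + l + 2 + 1 = 2 * n + l + 3 := by omega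
    rw [e6]
    have : ((-(a : ℤ)) ^ (n + 1)) = (-(a : ℤ)) ^ n * (-(a:ℤ)) := by ring
    linear_combination A1 + (a : ℤ) * A2 + ((-(a:ℤ))^n * (a:ℤ) - (-(a:ℤ))^(n+1)) * (y a (l+1) : ℤ) + 0
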